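/- arXiv:2010.10221 — 5 statements merged into one kernel-verified Lean document; each statement's English description precedes it below -/
import Mathlib

section
/- Let k ≥ 0 be a real number and define f : ℝ → ℝ by f(s) = s + log₂ s + k. Then there exist constants c₁ > 0 and c₂ > 0, independent of k, such that for every integer n ≥ 1 and every real s ≥ 1, the n-th iterate satisfies f^[n](s) ≤ s + n · log₂ s + c₁ · (k + 1) · (n + c₂) · ln(n + c₂). In particular f^[n](s) ≤ s + n log₂ s + O((k+1) n log n) + O(1). -/
set_option maxHeartbeats 1600000

/-- Iterating `f s = s + log₂ s + k` at most `n` times starting from `s ≥ 1` gives at most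
`s + n·log₂ s + c₁·(k+1)·(n+c₂)·ln(n+c₂)`, for absolute constants `c₁, c₂ > 0`
independent of `k`. -/
theorem iterate_log_step_bound :
    ∃ c₁ : ℝ, 0 < c₁ ∧ ∃ c₂ : ℝ, 0 < c₂ ∧
      ∀ k : ℝ, 0 ≤ k → ∀ n : ℕ, 1 ≤ n → ∀ s : ℝ, 1 ≤ s →
        (fun x : ℝ => x + Real.logb 2 x + k)^[n] s ≤
          s + n * Real.logb 2 s + c₁ * (k + 1) * (n + c₂) * Real.log (n + c₂) := by
  refine ⟨10, by norm_num, 3, by norm_num, ?_⟩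
  intro k hk n hn s hs
  have hl2 : (0.6931471803 : ℝ) < Real.log 2 := Real.log_two_gt_d9
  have hl2' : Real.log 2 < 0.6931471808 := Real.log_two_lt_d9
  have hlogb : ∀ x : ℝ, 0 ≤ Real.log x → Real.logb 2 x ≤ 2 * Real.log x := by
    intro x hx
    rw [Real.logb, div_le_iff₀ (by linarith)]
    nlinarith
  have hk1 : Real.log (k + 1) ≤ k := by
    have := Real.log_le_sub_one_of_pos (show (0:ℝ) < k + 1 by linarith)
    linarith
  have hiter : ∀ m : ℕ, 1 ≤ (fun x : ℝ => x + Real.logb 2 x + k)^[m] s := by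
    intro m
    induction m with
    | zero => simpa using hs
    | succ m ih =>
      rw [Function.iterate_succ_apply']
      have hlb : 0 ≤ Real.logb 2 ((fun x : ℝ => x + Real.logb 2 x + k)^[m] s) :=
        Real.logb_nonneg one_lt_two ih
      show 1 ≤ (fun x : ℝ => x + Real.logb 2 x + k)^[m] s
        + Real.logb 2 ((fun x : ℝ => x + Real.logb 2 x + k)^[m] s) + k
      linarith
  induction n, hn using Nat.le_induction with
  | base =>
      simp only [Function.iterate_one, Nat.cast_one]
      have h4 : Real.log ((1:ℝ) + 3) = 2 * Real.log 2 := by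
        rw [show (1:ℝ) + 3 = 2 ^ 2 by norm_num, Real.log_pow]
        push_cast; ring
      show s + Real.logb 2 s + k ≤
        s + 1 * Real.logb 2 s + 10 * (k + 1) * (1 + 3) * Real.log (1 + 3)
      rw [h4]
      nlinarith
  | succ n hn1 ih =>
      rw [Function.iterate_succ_apply']
      set t := (fun x : ℝ => x + Real.logb 2 x + k)^[n] s with hT
      have ht1 : 1 ≤ t := hiter n
      clear_value t
      clear hT
      set N : ℝ := (n : ℝ) with hN
      have hN1 : (1:ℝ) ≤ N := by rw [hN]; exact_mod_cast hn1
      set L : ℝ := Real.log (N + 3) with hL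
      set L' : ℝ := Real.log (N + 4) with hL'
      have hL0 : 0 ≤ L := Real.log_nonneg (by linarith)
      have hLle : L ≤ N + 3 := by
        have := Real.log_le_sub_one_of_pos (show (0:ℝ) < N + 3 by linarith)
        linarith
      have hstep : (N + 3) * L + L + 1 ≤ (N + 4) * L' := by
        have h1 : Real.log ((N + 3) / (N + 4)) ≤ (N + 3) / (N + 4) - 1 :=
          Real.log_le_sub_one_of_pos (by positivity)
        rw [Real.log_div (by linarith) (by linarith)] at h1
        have h2 : (N + 3) / (N + 4) - 1 = -(1 / (N + 4)) := by
          rw [div_sub_one (by linarith : (N:ℝ) + 4 ≠ 0)]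
          ring_nf
        rw [h2] at h1
        have h3 : L + 1 / (N + 4) ≤ L' := by linarith
        have h4 : (N + 4) * (L + 1 / (N + 4)) ≤ (N + 4) * L' :=
          mul_le_mul_of_nonneg_left h3 (by linarith)
        have h5 : (N + 4) * (1 / (N + 4)) = 1 := by
          field_simp
        nlinarith
      have hB : t ≤ s + N * Real.logb 2 s + 10 * (k + 1) * (N + 3) * L := ih
      have hls : Real.logb 2 s ≤ 2 * s := by
        have h1 := hlogb s (Real.log_nonneg hs)
        have h2 := Real.log_le_sub_one_of_pos (show (0:ℝ) < s by linarith)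
        linarith
      have hls0 : 0 ≤ Real.logb 2 s := Real.logb_nonneg one_lt_two hs
      have hM0 : (0:ℝ) < 20 * (k + 1) * (N + 3) ^ 2 := by positivity
      have hsM : t ≤ s * (20 * (k + 1) * (N + 3) ^ 2) := by
        have e1 : N * Real.logb 2 s ≤ N * (2 * s) :=
          mul_le_mul_of_nonneg_left hls (by linarith)
        have e2 : 10 * (k + 1) * (N + 3) * L ≤ 10 * (k + 1) * (N + 3) * (N + 3) :=
          mul_le_mul_of_nonneg_left hLle (by positivity)
        have c1 : 1 + 2 * N ≤ 10 * (k + 1) * (N + 3) ^ 2 := by nlinarith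
        have e4 : (1 + 2 * N) * s ≤ 10 * (k + 1) * (N + 3) ^ 2 * s :=
          mul_le_mul_of_nonneg_right c1 (by linarith)
        have e3 : 10 * (k + 1) * (N + 3) * (N + 3) ≤ 10 * (k + 1) * (N + 3) * (N + 3) * s := by
          nlinarith [mul_nonneg (mul_nonneg (mul_nonneg (by norm_num : (0:ℝ) ≤ 10)
            (by linarith : (0:ℝ) ≤ k + 1)) (by linarith : (0:ℝ) ≤ N + 3))
            (by linarith : (0:ℝ) ≤ N + 3)]
        linarith [e1, e2, e3, e4, hB]
      have hlt : Real.logb 2 t ≤ Real.logb 2 (s * (20 * (k + 1) * (N + 3) ^ 2)) := by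
        have hlog := Real.log_le_log (show (0:ℝ) < t by linarith) hsM
        rw [Real.logb, Real.logb]
        exact (div_le_div_iff_of_pos_right (by linarith : (0:ℝ) < Real.log 2)).mpr hlog
      have hmul : Real.logb 2 (s * (20 * (k + 1) * (N + 3) ^ 2)) =
          Real.logb 2 s + Real.logb 2 (20 * (k + 1) * (N + 3) ^ 2) :=
        Real.logb_mul (by linarith) (ne_of_gt hM0)
      have hlogM : Real.log (20 * (k + 1) * (N + 3) ^ 2) =
          Real.log 20 + Real.log (k + 1) + 2 * L := by
        rw [Real.log_mul (by positivity) (by positivity),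
            Real.log_mul (by norm_num) (by positivity), Real.log_pow]
        rw [hL]; push_cast; ring
      have h20 : Real.log 20 ≤ 5 * Real.log 2 := by
        have h1 : Real.log 20 ≤ Real.log 32 :=
          Real.log_le_log (by norm_num) (by norm_num)
        have h2 : Real.log 32 = 5 * Real.log 2 := by
          rw [show (32:ℝ) = 2 ^ 5 by norm_num, Real.log_pow]
          push_cast; ring
        linarith
      have hMlog0 : 0 ≤ Real.log (20 * (k + 1) * (N + 3) ^ 2) :=
        Real.log_nonneg (by nlinarith)
      have hMlb : Real.logb 2 (20 * (k + 1) * (N + 3) ^ 2) ≤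
          2 * Real.log (20 * (k + 1) * (N + 3) ^ 2) := hlogb _ hMlog0
      have hfinal : 10 * Real.log 2 + 3 * k + 4 * L ≤ 10 * (k + 1) * (L + 1) := by
        linarith [mul_nonneg hk hL0, hl2']
      have hmain : 10 * (k + 1) * ((N + 3) * L + L + 1) ≤ 10 * (k + 1) * ((N + 4) * L') :=
        mul_le_mul_of_nonneg_left hstep (by linarith)
      show t + Real.logb 2 t + k ≤
        s + (↑(n + 1) : ℝ) * Real.logb 2 s + 10 * (k + 1) * ((↑(n + 1) : ℝ) + 3)
          * Real.log ((↑(n + 1) : ℝ) + 3)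
      push_cast
      rw [← hN]
      have hc : (N + 1 + 3 : ℝ) = N + 4 := by ring
      rw [hc, ← hL']
      linarith [hB, hlt, hmul, hMlb, hlogM, h20, hk1, hfinal, hmain, hls0]
end

section
/- There exist constants c₁ > 0 and c₂ > 0 such that for all reals s ≥ 1 and k ≥ 0, the function F : ℝ → ℝ defined by F(x) = s + x · log₂ s + c₁ · (k + 1) · (x + c₂) · ln(x + c₂) satisfies F'(x) ≥ log₂ F(x) + k for every real x ≥ 1, where F' denotes the derivative of F. -/
set_option maxHeartbeats 1000000 in
/-- There are constants `c₁, c₂ > 0` such that for all `s ≥ 1`, `k ≥ 0`, the function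
`F x = s + x·log₂ s + c₁(k+1)(x+c₂)·ln(x+c₂)` satisfies `F'(x) ≥ log₂ F(x) + k`
for every `x ≥ 1`. -/
theorem deriv_ge_logb_self :
    ∃ c₁ : ℝ, 0 < c₁ ∧ ∃ c₂ : ℝ, 0 < c₂ ∧
      ∀ s k : ℝ, 1 ≤ s → 0 ≤ k → ∀ x : ℝ, 1 ≤ x →
        Real.logb 2
            (s + x * Real.logb 2 s + c₁ * (k + 1) * (x + c₂) * Real.log (x + c₂)) + k ≤
          deriv (fun y : ℝ =>
            s + y * Real.logb 2 s + c₁ * (k + 1) * (y + c₂) * Real.log (y + c₂)) x := by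
  refine ⟨10, by norm_num, 100, by norm_num, ?_⟩
  intro s k hs hk x hx
  have h0 : (0:ℝ) < x + 100 := by linarith
  have hk1 : (0:ℝ) < k + 1 := by linarith
  -- derivative computation
  have hid : HasDerivAt (fun y : ℝ => y + 100) 1 x := (hasDerivAt_id x).add_const 100
  have hlog : HasDerivAt (fun y : ℝ => Real.log (y + 100)) (1/(x+100)) x := by
    simpa [Function.comp_def] using (Real.hasDerivAt_log (ne_of_gt h0)).comp x hid
  have h1 : HasDerivAt (fun y : ℝ => 10 * (k+1) * (y+100) * Real.log (y+100))
      (10*(k+1)*(Real.log (x+100)+1)) x := by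
    have h : HasDerivAt (fun y : ℝ => 10 * (k+1) * (y+100) * Real.log (y+100))
        (10 * (k + 1) * 1 * Real.log (x + 100) + 10 * (k + 1) * (x + 100) * (1 / (x + 100))) x :=
      (hid.const_mul (10*(k+1))).mul hlog
    convert h using 1
    field_simp [h0.ne']
  have h2 : HasDerivAt (fun y : ℝ => s + y * Real.logb 2 s) (Real.logb 2 s) x := by
    simpa using ((hasDerivAt_id x).mul_const (Real.logb 2 s)).const_add s
  have hder : HasDerivAt (fun y : ℝ =>
      s + y * Real.logb 2 s + 10 * (k + 1) * (y + 100) * Real.log (y + 100))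
      (Real.logb 2 s + 10*(k+1)*(Real.log (x+100)+1)) x := h2.add h1
  rw [hder.deriv]
  set L := Real.log (x + 100) with hLdef
  set lb := Real.logb 2 s with hlbdef
  clear_value L lb
  -- L ≥ 4
  have hL4 : 4 ≤ L := by
    rw [hLdef, Real.le_log_iff_exp_le h0]
    have h1' : Real.exp 4 = Real.exp 1 ^ (4:ℕ) := by
      rw [← Real.exp_nat_mul]; norm_num
    have h2' : Real.exp 1 ^ (4:ℕ) ≤ (2.7182818286:ℝ) ^ (4:ℕ) :=
      pow_le_pow_left₀ (Real.exp_pos 1).le Real.exp_one_lt_d9.le 4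
    have h3' : (2.7182818286:ℝ) ^ (4:ℕ) ≤ 55 := by norm_num
    linarith
  have hLpos : (0:ℝ) < L := by linarith
  have hℓ2 : (1/2 : ℝ) ≤ Real.log 2 := by
    have := Real.log_two_gt_d9; linarith
  have hℓ2pos : (0:ℝ) < Real.log 2 := by linarith
  have hlb0 : 0 ≤ lb := by rw [hlbdef]; exact Real.logb_nonneg one_lt_two hs
  have hlb2s : lb ≤ 2 * s := by
    have h4 : Real.log s ≤ s - 1 := Real.log_le_sub_one_of_pos (by linarith)
    rw [hlbdef, Real.logb, div_le_iff₀ hℓ2pos]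
    nlinarith
  set F := s + x * lb + 10 * (k + 1) * (x + 100) * L with hFdef
  clear_value F
  have hT : (0:ℝ) < 10 * (k + 1) * (x + 100) * L :=
    mul_pos (mul_pos (mul_pos (by norm_num) hk1) h0) hLpos
  have hxlb : 0 ≤ x * lb := mul_nonneg (by linarith) hlb0
  have hFpos : 0 < F := by rw [hFdef]; linarith
  set P := (x+100) * 3 * s * 10 * (k+1) * L with hPdef
  clear_value P
  have hxL : (404:ℝ) ≤ (x+100) * L := by
    nlinarith [mul_nonneg (by linarith : (0:ℝ) ≤ x + 100 - 101) (by linarith : (0:ℝ) ≤ L - 4)]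
  have hM404 : (404:ℝ) ≤ (k+1) * ((x+100) * L) := by
    nlinarith [mul_nonneg (by linarith : (0:ℝ) ≤ k) (by linarith : (0:ℝ) ≤ (x+100)*L)]
  have hM4x : 4 * x ≤ (k+1) * ((x+100) * L) := by
    nlinarith [mul_nonneg (by linarith : (0:ℝ) ≤ k) (by linarith : (0:ℝ) ≤ (x+100)*L),
      mul_nonneg (by linarith : (0:ℝ) ≤ x + 100) (by linarith : (0:ℝ) ≤ L - 4)]
  have hFP : F ≤ P := by
    rw [hFdef, hPdef]
    have t1 : s ≤ 10 * s * ((k+1) * ((x+100) * L)) := by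
      nlinarith [mul_nonneg (by linarith : (0:ℝ) ≤ s)
        (by linarith : (0:ℝ) ≤ 10 * ((k+1) * ((x+100) * L)) - 1)]
    have t2 : x * lb ≤ 10 * s * ((k+1) * ((x+100) * L)) := by
      have u1 : x * lb ≤ x * (2 * s) :=
        mul_le_mul_of_nonneg_left hlb2s (by linarith)
      have u2 : 2 * s * x ≤ 10 * s * ((k+1) * ((x+100) * L)) := by
        nlinarith [mul_nonneg (by linarith : (0:ℝ) ≤ 2 * s)
          (by linarith : (0:ℝ) ≤ 5 * ((k+1) * ((x+100) * L)) - x)]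
      linarith [u1, u2]
    have t3 : 10 * (k+1) * (x+100) * L ≤ 10 * s * ((k+1) * ((x+100) * L)) := by
      nlinarith [mul_nonneg (by linarith : (0:ℝ) ≤ s - 1)
        (by linarith : (0:ℝ) ≤ (k+1) * ((x+100) * L))]
    nlinarith [t1, t2, t3]
  have hlogP : Real.log P = L + Real.log 3 + Real.log s + Real.log 10 + Real.log (k+1)
      + Real.log L := by
    have p1 : (0:ℝ) < (x+100)*3 := by linarith
    have p2 : (0:ℝ) < (x+100)*3*s := mul_pos p1 (by linarith)
    have p3 : (0:ℝ) < (x+100)*3*s*10 := mul_pos p2 (by norm_num)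
    have p4 : (0:ℝ) < (x+100)*3*s*10*(k+1) := mul_pos p3 hk1
    rw [hPdef, Real.log_mul p4.ne' hLpos.ne', Real.log_mul p3.ne' hk1.ne',
        Real.log_mul p2.ne' (by norm_num : (10:ℝ) ≠ 0),
        Real.log_mul p1.ne' (by linarith : s ≠ 0),
        Real.log_mul h0.ne' (by norm_num : (3:ℝ) ≠ 0), ← hLdef]
  have hlog3 : Real.log 3 ≤ 2 := by
    have := Real.log_le_sub_one_of_pos (by norm_num : (0:ℝ) < 3); linarith
  have hlog10 : Real.log 10 ≤ 9 := by
    have := Real.log_le_sub_one_of_pos (by norm_num : (0:ℝ) < 10); linarith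
  have hlogk : Real.log (k+1) ≤ k := by
    have := Real.log_le_sub_one_of_pos hk1; linarith
  have hlogL : Real.log L ≤ L - 1 := by
    have := Real.log_le_sub_one_of_pos hLpos; linarith
  have hlogs : Real.log s = lb * Real.log 2 := by
    rw [hlbdef, Real.logb, div_mul_cancel₀ _ hℓ2pos.ne']
  have hlogF : Real.log F ≤ 2*L + lb * Real.log 2 + k + 10 := by
    have h5 := Real.log_le_log hFpos hFP
    rw [hlogP] at h5
    linarith [h5, hlogs, hlog3, hlog10, hlogk, hlogL]
  have hfin : Real.logb 2 F ≤ 4*L + 2*k + 20 + lb := by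
    rw [Real.logb, div_le_iff₀ hℓ2pos]
    have hℓ2le1 : Real.log 2 ≤ 1 := by
      have := Real.log_le_sub_one_of_pos (by norm_num : (0:ℝ) < 2); linarith
    nlinarith [hlogF, mul_le_mul_of_nonneg_left hℓ2
      (by linarith : (0:ℝ) ≤ 4*L + 2*k + 20)]
  nlinarith [hfin, mul_nonneg hk (by linarith : (0:ℝ) ≤ L)]
end

section
/- Let c be a positive integer and k ≥ 0 a real number, and define h : ℝ → ℝ by h(x) = x + log₂ x + k/c. Then for every real s ≥ 1, one iteration of the map x ↦ x + c·log₂ x + k is dominated by c iterations of h; that is, s + c · log₂ s + k ≤ h^[c](s). -/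
/-- One iteration of `x ↦ x + c·log₂ x + k` is dominated by `c` iterations of
`h x = x + log₂ x + k/c`. -/
theorem big_step_le_iterate_small_steps (c : ℕ) (hc : 0 < c) (k : ℝ) (hk : 0 ≤ k)
    (s : ℝ) (hs : 1 ≤ s) :
    s + c * Real.logb 2 s + k ≤
      (fun x : ℝ => x + Real.logb 2 x + k / c)^[c] s := by
  set h : ℝ → ℝ := fun x : ℝ => x + Real.logb 2 x + k / c with hh
  have hkc : 0 ≤ k / c := div_nonneg hk (Nat.cast_nonneg c)
  have hls : 0 ≤ Real.logb 2 s := Real.logb_nonneg one_lt_two hs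
  have key : ∀ n : ℕ, s + n * Real.logb 2 s + n * (k / c) ≤ h^[n] s := by
    intro n
    induction n with
    | zero => simp
    | succ n ih =>
      have hge : s ≤ h^[n] s := by
        nlinarith [mul_nonneg (Nat.cast_nonneg (α := ℝ) n) hls,
          mul_nonneg (Nat.cast_nonneg (α := ℝ) n) hkc]
      have hlog : Real.logb 2 s ≤ Real.logb 2 (h^[n] s) :=
        Real.logb_le_logb_of_le one_lt_two (by linarith) hge
      rw [Function.iterate_succ_apply']
      show s + (↑(n+1)) * Real.logb 2 s + (↑(n+1)) * (k / c) ≤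
        h^[n] s + Real.logb 2 (h^[n] s) + k / c
      push_cast
      nlinarith
  have := key c
  have hck : (c : ℝ) * (k / c) = k := by
    field_simp
  rw [hck] at this
  exact this
end

section
/- There exist constants C₁ > 0 and C₂ > 0 such that for every positive integer c, every real k ≥ 0, every integer n ≥ 1 and every real s ≥ 1, the map g : ℝ → ℝ defined by g(x) = x + c · log₂ x + k satisfies g^[n](s) ≤ s + c·n · log₂ s + C₁ · (k/c + 1) · (c·n + C₂) · ln(c·n + C₂). In particular g^[n](s) ≤ s + c n log₂ s + O((k/c + 1) c n log(c n)). -/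
private lemma logb2_le_two_log {t : ℝ} (ht : 1 ≤ t) : Real.logb 2 t ≤ 2 * Real.log t := by
  have hlt : Real.log t ≥ 0 := Real.log_nonneg ht
  have h2 : (0.6931471803 : ℝ) < Real.log 2 := Real.log_two_gt_d9
  rw [Real.logb, div_le_iff₀ (by linarith)]
  nlinarith

set_option maxHeartbeats 1000000 in
private lemma iter_aux (C k : ℝ) (hC : 1 ≤ C) (hk : 0 ≤ k) (s : ℝ) (hs : 1 ≤ s) :
    ∀ n : ℕ,
      1 ≤ (fun x : ℝ => x + C * Real.logb 2 x + k)^[n] s ∧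
      (fun x : ℝ => x + C * Real.logb 2 x + k)^[n] s ≤
        s + C * n * Real.logb 2 s + k * n +
          11 * C * (k / C + 1) * n * Real.log (C * n + 3) := by
  set K : ℝ := k / C + 1 with hKdef
  have hC0 : (0 : ℝ) < C := by linarith
  have hK1 : 1 ≤ K := by
    have : 0 ≤ k / C := div_nonneg hk hC0.le
    simp only [hKdef]; linarith
  have hkK : k = (K - 1) * C := by rw [hKdef]; field_simp; ring
  intro n
  induction n with
  | zero =>
    refine ⟨by simpa using hs, ?_⟩
    simp
  | succ n ih =>
    obtain ⟨hy1, hyB⟩ := ih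
    set y : ℝ := (fun x : ℝ => x + C * Real.logb 2 x + k)^[n] s with hydef
    set x : ℝ := C * n with hxdef
    have hx0 : 0 ≤ x := by positivity
    set L : ℝ := Real.log (C * n + 3) with hLdef
    have hL1 : 1 ≤ L := by
      have h3 : Real.exp 1 < 3 := by
        have := Real.exp_one_lt_d9; linarith
      have h1 : (1 : ℝ) < Real.log 3 := (Real.lt_log_iff_exp_lt (by norm_num)).mpr h3
      have hmono : Real.log 3 ≤ Real.log (C * n + 3) :=
        Real.log_le_log (by norm_num) (by linarith)
      rw [hLdef]; linarith
    have hL0 : (0 : ℝ) ≤ L := by linarith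
    have hK0 : (0 : ℝ) ≤ K := by linarith
    have hLx : L ≤ x + 3 := by
      have := Real.log_le_sub_one_of_pos (show (0:ℝ) < x + 3 by linarith)
      rw [hLdef, hxdef]; rw [hxdef] at this; linarith
    set B : ℝ := s + C * n * Real.logb 2 s + k * n + 11 * C * K * n * L with hBdef
    have hlogs0 : 0 ≤ Real.logb 2 s := Real.logb_nonneg (by norm_num) hs
    have hCKnL0 : 0 ≤ 11 * C * K * n * L := by
      have h1 : (0:ℝ) ≤ 11 * C * K * n :=
        mul_nonneg (mul_nonneg (by linarith) hK0) (Nat.cast_nonneg n)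
      exact mul_nonneg h1 hL0
    have hsB : s ≤ B := by
      have h1 : 0 ≤ C * n * Real.logb 2 s := by positivity
      have h2 : 0 ≤ k * n := by positivity
      rw [hBdef]; linarith
    have hB1 : 1 ≤ B := le_trans hs hsB
    have hstep : (fun x : ℝ => x + C * Real.logb 2 x + k)^[n + 1] s
        = y + C * Real.logb 2 y + k := by
      rw [Function.iterate_succ_apply']
    have hy1' : 1 ≤ y + C * Real.logb 2 y + k := by
      have : 0 ≤ Real.logb 2 y := Real.logb_nonneg (by norm_num) hy1
      nlinarith
    refine ⟨by rw [hstep]; exact hy1', ?_⟩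
    -- polynomial facts with t := x + 3
    set t : ℝ := x + 3 with htdef
    have ht3 : 3 ≤ t := by rw [htdef]; linarith
    have ht2 : 11 * x ≤ t ^ 2 := by rw [htdef]; nlinarith [sq_nonneg (x - 2)]
    have hxt2 : x ≤ t ^ 2 := by rw [htdef]; nlinarith [sq_nonneg x]
    have h12x : 1 + 2 * x ≤ t ^ 2 := by rw [htdef]; nlinarith [sq_nonneg x]
    have h11xL : 11 * x * L ≤ t ^ 3 := by
      calc 11 * x * L ≤ t ^ 2 * L := mul_le_mul_of_nonneg_right ht2 hL0
        _ ≤ t ^ 2 * t := mul_le_mul_of_nonneg_left hLx (sq_nonneg t)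
        _ = t ^ 3 := by ring
    have ht23 : t ^ 2 + t ^ 3 ≤ t ^ 4 := by nlinarith [sq_nonneg t, sq_nonneg (t - 1)]
    have hx11 : x + 11 * x * L ≤ t ^ 4 := by linarith
    have h1211 : 1 + 2 * x + 11 * x * L ≤ t ^ 4 := by linarith
    have hpoly : 1 + 2 * x + (K - 1) * x + 11 * K * x * L ≤ K * t ^ 4 := by
      have hKm : 0 ≤ K - 1 := by linarith
      have := mul_le_mul_of_nonneg_left hx11 hKm
      nlinarith [this, h1211]
    have hBle : B ≤ s * (K * t ^ 4) := by
      have hlbs : Real.logb 2 s ≤ 2 * s := by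
        have h1 := logb2_le_two_log hs
        have h2 := Real.log_le_sub_one_of_pos (show (0:ℝ) < s by linarith)
        linarith
      have hkn : k * n = (K - 1) * x := by rw [hkK, hxdef]; ring
      have hterm2 : k * n ≤ (K - 1) * x * s := by
        rw [hkn]
        nlinarith [mul_nonneg (sub_nonneg.mpr hK1) hx0]
      have hterm3 : 11 * C * K * n * L ≤ 11 * K * x * L * s := by
        have heq : 11 * C * K * n * L = 11 * K * x * L := by rw [hxdef]; ring
        nlinarith [hCKnL0, heq]
      have hterm1 : C * n * Real.logb 2 s ≤ 2 * x * s := by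
        have h0 : 0 ≤ C * (n:ℝ) := by positivity
        have := mul_le_mul_of_nonneg_left hlbs h0
        rw [hxdef]; nlinarith [this]
      calc B ≤ s + 2 * x * s + (K - 1) * x * s + 11 * K * x * L * s := by
              rw [hBdef]; linarith
        _ = s * (1 + 2 * x + (K - 1) * x + 11 * K * x * L) := by ring
        _ ≤ s * (K * t ^ 4) :=
              mul_le_mul_of_nonneg_left hpoly (by linarith)
    have ht4 : (1 : ℝ) ≤ t ^ 4 := by nlinarith [sq_nonneg t, sq_nonneg (t-1), ht23]
    have hKx1 : 1 ≤ K * t ^ 4 := by nlinarith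
    have hlogB : Real.logb 2 B ≤ Real.logb 2 s + 11 * K * L := by
      have h1 : Real.logb 2 B ≤ Real.logb 2 (s * (K * t ^ 4)) :=
        Real.logb_le_logb_of_le (by norm_num) (by linarith) hBle
      have h2 : Real.logb 2 (s * (K * t ^ 4))
          = Real.logb 2 s + Real.logb 2 (K * t ^ 4) :=
        Real.logb_mul (by linarith) (by linarith)
      have h3 : Real.logb 2 (K * t ^ 4) ≤ 2 * Real.log (K * t ^ 4) :=
        logb2_le_two_log hKx1
      have h4 : Real.log (K * t ^ 4) = Real.log K + 4 * Real.log t := by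
        rw [Real.log_mul (by linarith) (by positivity), Real.log_pow]
        norm_num
      have h5 : Real.log K ≤ K - 1 := Real.log_le_sub_one_of_pos (by linarith)
      have h6 : Real.log t = L := by rw [hLdef, htdef, hxdef]
      have h7 : 2 * (Real.log K + 4 * Real.log t) ≤ 11 * K * L := by
        rw [h6]
        have hKm0 : (0:ℝ) ≤ K - 1 := by linarith
        have q1 : 2 * Real.log K ≤ 2 * (K - 1) := by linarith
        have q2 : K - 1 ≤ (K - 1) * L := le_mul_of_one_le_right hKm0 hL1
        have q3 : L ≤ K * L := le_mul_of_one_le_left hL0 hK1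
        have q4 : (K - 1) * L = K * L - L := by ring
        have q5 : (0:ℝ) ≤ K * L := mul_nonneg hK0 hL0
        linarith
      linarith
    have harg : C * (n:ℝ) + 3 ≤ C * ((n:ℝ) + 1) + 3 := by
      have e : C * ((n:ℝ) + 1) = C * (n:ℝ) + C := by ring
      linarith
    have hLL' : L ≤ Real.log (C * ((n:ℝ) + 1) + 3) := by
      rw [hLdef]; exact Real.log_le_log (by positivity) harg
    rw [hstep]
    have hlogy : C * Real.logb 2 y ≤ C * Real.logb 2 B :=
      mul_le_mul_of_nonneg_left
        (Real.logb_le_logb_of_le (by norm_num) (by linarith) hyB) hC0.le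
    have hfin : B + C * Real.logb 2 B + k ≤
        s + C * (n + 1 : ℕ) * Real.logb 2 s + k * (n + 1 : ℕ) +
          11 * C * K * (n + 1 : ℕ) * Real.log (C * (n + 1 : ℕ) + 3) := by
      have e1 : C * Real.logb 2 B ≤ C * Real.logb 2 s + 11 * C * K * L := by
        have := mul_le_mul_of_nonneg_left hlogB hC0.le
        have e : C * (Real.logb 2 s + 11 * K * L) = C * Real.logb 2 s + 11 * C * K * L := by
          ring
        linarith
      have e2 : 11 * C * K * ((n : ℝ) + 1) * L ≤
          11 * C * K * ((n : ℝ) + 1) * Real.log (C * ((n : ℝ) + 1) + 3) := by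
        have h0 : (0:ℝ) ≤ 11 * C * K * ((n : ℝ) + 1) := by positivity
        exact mul_le_mul_of_nonneg_left hLL' h0
      have e3 : 11 * C * K * ((n : ℝ) + 1) * L = 11 * C * K * (n : ℝ) * L + 11 * C * K * L := by
        ring
      push_cast
      push_cast at e2
      rw [hBdef]
      linarith [e1, e2, e3]
    linarith [hlogy, hfin, hyB]

/-- For absolute constants `C₁, C₂ > 0`: for every positive integer `c`, `k ≥ 0`,
`n ≥ 1`, `s ≥ 1`, the iterates of `g x = x + c·log₂ x + k` satisfy
`g^[n] s ≤ s + c·n·log₂ s + C₁·(k/c+1)·(c·n+C₂)·ln(c·n+C₂)`. -/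
theorem iterate_scaled_log_step_bound :
    ∃ C₁ : ℝ, 0 < C₁ ∧ ∃ C₂ : ℝ, 0 < C₂ ∧
      ∀ c : ℕ, 0 < c → ∀ k : ℝ, 0 ≤ k → ∀ n : ℕ, 1 ≤ n → ∀ s : ℝ, 1 ≤ s →
        (fun x : ℝ => x + c * Real.logb 2 x + k)^[n] s ≤
          s + c * n * Real.logb 2 s +
            C₁ * (k / c + 1) * (c * n + C₂) * Real.log (c * n + C₂) := by
  refine ⟨12, by norm_num, 3, by norm_num, ?_⟩
  intro c hc k hk n hn s hs
  have hC : (1 : ℝ) ≤ c := by exact_mod_cast hc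
  have hC0 : (0 : ℝ) < c := by linarith
  obtain ⟨-, hbound⟩ := iter_aux c k hC hk s hs n
  set K : ℝ := k / c + 1 with hKdef
  have hK1 : 1 ≤ K := by
    have : 0 ≤ k / (c:ℝ) := div_nonneg hk hC0.le
    simp only [hKdef]; linarith
  set L : ℝ := Real.log ((c:ℝ) * n + 3) with hLdef
  have hcn0 : (0:ℝ) ≤ (c:ℝ) * n := by positivity
  have hL1 : 1 ≤ L := by
    have h3 : Real.exp 1 < 3 := by have := Real.exp_one_lt_d9; linarith
    have h1 : (1 : ℝ) < Real.log 3 := (Real.lt_log_iff_exp_lt (by norm_num)).mpr h3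
    have hmono : Real.log 3 ≤ Real.log ((c:ℝ) * n + 3) :=
      Real.log_le_log (by norm_num) (by linarith)
    rw [hLdef]; linarith
  refine le_trans hbound ?_
  have hkc : k = (K - 1) * c := by rw [hKdef]; field_simp; ring
  have hKm0 : (0:ℝ) ≤ K - 1 := by linarith
  have h1 : k * n ≤ K * ((c:ℝ) * n) * L := by
    have ha : k * n = (K - 1) * ((c:ℝ) * n) := by rw [hkc]; ring
    have hb : (K - 1) * ((c:ℝ) * n) ≤ K * ((c:ℝ) * n) := by nlinarith
    have hcc : K * ((c:ℝ) * n) ≤ K * ((c:ℝ) * n) * L := by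
      nlinarith [mul_nonneg (mul_nonneg (by linarith : (0:ℝ) ≤ K) hcn0) (by linarith : (0:ℝ) ≤ L - 1)]
    linarith [ha ▸ hb]
  have h2 : 11 * (c:ℝ) * K * n * L ≤ 11 * K * ((c:ℝ) * n + 3) * L := by
    have : (0:ℝ) ≤ 11 * K * L := by positivity
    nlinarith [mul_nonneg (by linarith : (0:ℝ) ≤ 11 * K) (by linarith : (0:ℝ) ≤ L)]
  have h3 : K * ((c:ℝ) * n) * L ≤ K * ((c:ℝ) * n + 3) * L := by
    nlinarith [mul_nonneg (by linarith : (0:ℝ) ≤ K) (by linarith : (0:ℝ) ≤ L)]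
  nlinarith [h1, h2, h3]
end

section
/- Let α be a type, f : α → α a function, x y : α, and S a finite set (Finset) of elements of α such that f^[i](x) ∈ S for every natural number i. Suppose y is a fixed point of f (f(y) = y) and that y is reached from x, i.e., f^[n](x) = y for some natural number n. Then y is reached within |S| steps: there exists m < S.card with f^[m](x) = y. -/
/-- Loop detection: if all iterates of `f` starting at `x` stay in a finite set `S`, `y` is a
fixed point of `f`, and `y` is reached from `x`, then `y` is reached in fewer than `S.card`
steps. -/
theorem fixedPoint_reached_within_card {α : Type*} (f : α → α) (x y : α)
    (S : Finset α) (hS : ∀ i : ℕ, f^[i] x ∈ S)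
    (hfix : f y = y) (n : ℕ) (hn : f^[n] x = y) :
    ∃ m < S.card, f^[m] x = y := by
  classical
  -- take least m with f^[m] x = y
  let P : ℕ → Prop := fun m => f^[m] x = y
  have hex : ∃ m, P m := ⟨n, hn⟩
  set m := Nat.find hex with hmdef
  have hm : P m := Nat.find_spec hex
  have hmin : ∀ k < m, ¬ P k := fun k hk => Nat.find_min hex hk
  · refine ⟨m, ?_, hm⟩
    by_contra hlt
    push_neg at hlt
    -- the map i ↦ f^[i] x is injective on Fin (m+1)
    have key : ∀ i j : ℕ, i < j → j ≤ m → f^[i] x = f^[j] x → False := by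
      intro i j hij hjm heq
      have h1 : f^[m - j] (f^[j] x) = y := by
        rw [← Function.iterate_add_apply, Nat.sub_add_cancel hjm]; exact hm
      rw [← heq, ← Function.iterate_add_apply] at h1
      exact hmin (m - j + i) (by omega) h1
    have hinj : Function.Injective (fun i : Fin (m + 1) => f^[(i : ℕ)] x) := by
      intro i j hij
      simp only at hij
      rcases lt_trichotomy (i : ℕ) (j : ℕ) with h | h | h
      · exact absurd hij (by intro e; exact key _ _ h (Nat.lt_succ_iff.mp j.isLt) e)
      · exact Fin.ext h
      · exact absurd hij.symm (by intro e; exact key _ _ h (Nat.lt_succ_iff.mp i.isLt) e)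
    have hcard : m + 1 ≤ S.card := by
      have := Finset.card_le_card_of_injOn (s := Finset.univ)
        (fun i : Fin (m + 1) => f^[(i : ℕ)] x) (fun i _ => hS i) (hinj.injOn)
      simpa using this
    omega
end
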